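/- arXiv:0908.2050 — 9 statements merged into one kernel-verified Lean document; each statement's English description precedes it below -/
import Mathlib

section
/- Let X be a type of variables and V, V' types of values. Let p be a propagator on V'-domains (contracting and monotonic) and let φ be a view from V to V'. Then the derived propagator φ̂(p) = φ⁻ ∘ p ∘ φ is itself a propagator: it is contracting (φ̂(p) d x ⊆ d x for every domain d and every x) and monotonic (if d' x ⊆ d x for all x, then φ̂(p) d' x ⊆ φ̂(p) d x for all x). -/
/-- The derived propagator `φ⁻ ∘ p ∘ φ` is contracting and monotonic. -/
theorem derived_is_propagator {X V V' : Type*}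
    (p : (X → Set V') → (X → Set V'))
    (hcontr : ∀ d x, p d x ⊆ d x)
    (hmono : ∀ d' d : X → Set V', (∀ x, d' x ⊆ d x) → ∀ x, p d' x ⊆ p d x)
    (φ : X → V → V') (hφ : ∀ x, Function.Injective (φ x)) :
    (∀ (d : X → Set V) (x : X),
        (φ x) ⁻¹' (p (fun y => φ y '' d y) x) ⊆ d x) ∧
    (∀ d' d : X → Set V, (∀ x, d' x ⊆ d x) → ∀ x,
        (φ x) ⁻¹' (p (fun y => φ y '' d' y) x) ⊆
        (φ x) ⁻¹' (p (fun y => φ y '' d y) x)) :=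
  ⟨fun d x => calc
      (φ x) ⁻¹' (p (fun y => φ y '' d y) x) ⊆ (φ x) ⁻¹' (φ x '' d x) :=
        Set.preimage_mono (hcontr _ x)
      _ = d x := Set.preimage_image_eq _ (hφ x),
   fun _ _ h x => Set.preimage_mono (hmono _ _ (fun y => Set.image_mono (h y)) x)⟩
end

section
/- Let X be a type of variables and V, V' types of values. Let p : (X → Set V') → (X → Set V') be contracting and weakly monotonic, i.e., for every domain d and every assignment a licensed by d (a x ∈ d x for all x), p (fun x => {a x}) x ⊆ p d x for all x. Then for any view φ from V to V', the derived propagator φ̂(p) = φ⁻ ∘ p ∘ φ is weakly monotonic: for every domain d over V and every assignment a with a x ∈ d x for all x, φ̂(p) (fun x => {a x}) x ⊆ φ̂(p) d x for all x. -/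
/-- The propagator derived from a contracting, weakly monotonic function
is weakly monotonic. -/
theorem derived_weakly_monotonic {X V V' : Type*}
    (p : (X → Set V') → (X → Set V'))
    (hcontr : ∀ d x, p d x ⊆ d x)
    (hwmono : ∀ (d : X → Set V') (a : X → V'), (∀ x, a x ∈ d x) →
        ∀ x, p (fun y => ({a y} : Set V')) x ⊆ p d x)
    (φ : X → V → V') (hφ : ∀ x, Function.Injective (φ x)) :
    ∀ (d : X → Set V) (a : X → V), (∀ x, a x ∈ d x) →
      ∀ x, (φ x) ⁻¹' (p (fun y => φ y '' ({a y} : Set V)) x) ⊆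
           (φ x) ⁻¹' (p (fun y => φ y '' d y) x) := by
  intro d a ha x
  apply Set.preimage_mono
  have h : (fun y => φ y '' ({a y} : Set V)) = fun y => ({φ y (a y)} : Set V') := by
    funext y; simp
  rw [h]
  exact hwmono (fun y => φ y '' d y) (fun y => φ y (a y))
    (fun y => Set.mem_image_of_mem _ (ha y)) x
end

section
/- Let X be a type of variables and V, V' types of values. Let p : (X → Set V') → (X → Set V') be contracting, and let φ be a view from V to V'. Then the constraint induced by the derived propagator is the φ-inverse image of the constraint induced by p: {a : X → V | φ̂(p) (fun x => {a x}) = (fun x => {a x})} = φ_Asn ⁻¹' {b : X → V' | p (fun x => {b x}) = (fun x => {b x})}. -/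
/-- The constraint induced by the derived propagator is the `φ_Asn`-preimage
of the constraint induced by `p`. -/
theorem derived_induced_constraint {X V V' : Type*}
    (p : (X → Set V') → (X → Set V'))
    (hcontr : ∀ d x, p d x ⊆ d x)
    (φ : X → V → V') (hφ : ∀ x, Function.Injective (φ x)) :
    {a : X → V |
        (fun x => (φ x) ⁻¹' (p (fun y => φ y '' ({a y} : Set V)) x)) =
        (fun x => ({a x} : Set V))} =
    (fun (a : X → V) => fun x => φ x (a x)) ⁻¹'
      {b : X → V' |
        p (fun x => ({b x} : Set V')) = (fun x => ({b x} : Set V'))} := by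
  ext a
  simp only [Set.mem_setOf_eq, Set.mem_preimage, Set.image_singleton, funext_iff]
  constructor
  · intro h x
    have hsub := hcontr (fun y => {φ y (a y)}) x
    have hx := h x
    apply Set.Subset.antisymm hsub
    intro v hv
    rw [Set.mem_singleton_iff] at hv
    subst hv
    have : a x ∈ (φ x) ⁻¹' (p (fun y => {φ y (a y)}) x) := by
      rw [hx]; exact rfl
    exact this
  · intro h x
    ext v
    simp only [Set.mem_preimage, h x, Set.mem_singleton_iff]
    exact ⟨fun hv => hφ x hv, fun hv => by rw [hv]⟩
end

section
/- Let X be a type of variables and V, V' types of values. Let p : (X → Set V') → (X → Set V') be any function on domains, φ a view from V to V', and d a domain over V. If p prunes the transformed domain, i.e., p (φ d) x ⊆ (φ d) x for all x and p (φ d) x₀ ⊊ (φ d) x₀ for some x₀, then the derived propagator prunes d: φ̂(p) d x ⊆ d x for all x and φ̂(p) d x₁ ⊊ d x₁ for some x₁. -/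
/-- Views preserve contraction: if `p` prunes the transformed domain `φ d`,
then the derived propagator prunes `d`. -/
theorem views_preserve_contraction {X V V' : Type*}
    (p : (X → Set V') → (X → Set V'))
    (φ : X → V → V') (hφ : ∀ x, Function.Injective (φ x))
    (d : X → Set V)
    (hsub : ∀ x, p (fun y => φ y '' d y) x ⊆ φ x '' d x)
    (hstrict : ∃ x₀, p (fun y => φ y '' d y) x₀ ⊂ φ x₀ '' d x₀) :
    (∀ x, (φ x) ⁻¹' (p (fun y => φ y '' d y) x) ⊆ d x) ∧
    (∃ x₁, (φ x₁) ⁻¹' (p (fun y => φ y '' d y) x₁) ⊂ d x₁) := by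
  constructor
  · intro x v hv
    obtain ⟨w, hw, hwe⟩ := hsub x hv
    exact (hφ x hwe) ▸ hw
  · obtain ⟨x₀, hsub₀, hne⟩ := hstrict
    refine ⟨x₀, ?_, ?_⟩
    · intro v hv
      obtain ⟨w, hw, hwe⟩ := hsub₀ hv
      exact (hφ x₀ hwe) ▸ hw
    · intro hcontra
      apply hne
      intro v' hv'
      obtain ⟨w, hw, rfl⟩ := hv'
      exact hcontra hw
end

section
/- Let X be a type of variables and V, V' types of values, and let φ be a view from V to V'. For every φ-constraint c : Set (X → V'), i.e., every constraint with c ⊆ Set.range φ_Asn, the preimage under φ_Asn of the licensed assignments of the domain relaxation of c equals the licensed assignments of the domain relaxation of the preimage: φ_Asn ⁻¹' ⟦dom(c)⟧ = ⟦dom(φ_Asn ⁻¹' c)⟧. -/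
/-- Any view is domain-injective: for every φ-constraint `c`,
`φ_Asn ⁻¹' ⟦dom(c)⟧ = ⟦dom(φ_Asn ⁻¹' c)⟧`. -/
theorem view_domain_injective {X V V' : Type*}
    (φ : X → V → V') (hφ : ∀ x, Function.Injective (φ x))
    (c : Set (X → V'))
    (hc : c ⊆ Set.range (fun (a : X → V) => fun x => φ x (a x))) :
    (fun (a : X → V) => fun x => φ x (a x)) ⁻¹'
        {b : X → V' | ∀ x, b x ∈ (fun a : X → V' => a x) '' c} =
      {a : X → V | ∀ x, a x ∈ (fun a' : X → V => a' x) ''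
          ((fun (a'' : X → V) => fun y => φ y (a'' y)) ⁻¹' c)} := by
  ext a
  simp only [Set.mem_preimage, Set.mem_setOf_eq, Set.mem_image, Set.mem_preimage]
  constructor
  · intro h x
    obtain ⟨b, hb, hbx⟩ := h x
    obtain ⟨a'', ha''⟩ := hc hb
    refine ⟨a'', (show (fun x => φ x (a'' x)) = b from ha'') ▸ hb, ?_⟩
    apply hφ x
    rw [show φ x (a'' x) = b x from congrFun ha'' x, hbx]
  · intro h x
    obtain ⟨a'', ha'', hax⟩ := h x
    exact ⟨fun y => φ y (a'' y), ha'', (by rw [hax] : φ x (a'' x) = φ x (a x))⟩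
end

section
/- Let X be a type of variables and V, V' types of values. Let p be a propagator on V'-domains (contracting and monotonic) that is domain-complete, i.e., p d' x ⊆ dom(c_p ∩ ⟦d'⟧) x for every domain d' over V' and every x, where c_p is the constraint induced by p. Then for any view φ from V to V', the derived propagator is domain-complete for its induced constraint: φ̂(p) d x ⊆ dom((φ_Asn ⁻¹' c_p) ∩ ⟦d⟧) x for every domain d over V and every x. -/
/-- The lifting of a view to assignments. -/
def liftAsn {X V V' : Type*} (φ : X → V → V') (a : X → V) : X → V' := fun x => φ x (a x)

/-- The set of assignments licensed by a domain. -/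
def licensed {X V : Type*} (d : X → Set V) : Set (X → V) := {a | ∀ x, a x ∈ d x}

/-- The domain relaxation of a constraint. -/
def domRel {X V : Type*} (c : Set (X → V)) : X → Set V := fun x => (fun a : X → V => a x) '' c

/-- The constraint induced by a propagator. -/
def induced {X V : Type*} (p : (X → Set V) → (X → Set V)) : Set (X → V) :=
  {a | p (fun x => {a x}) = fun x => {a x}}

/-- The propagator derived from `p` via the view `φ`. -/
def derived {X V V' : Type*} (φ : X → V → V')
    (p : (X → Set V') → (X → Set V')) (d : X → Set V) : X → Set V :=
  fun x => (φ x) ⁻¹' (p (fun y => φ y '' d y) x)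

/-- Domain completeness is inherited by derived propagators. -/
theorem derived_domain_complete {X V V' : Type*}
    (p : (X → Set V') → (X → Set V'))
    (hcontr : ∀ d x, p d x ⊆ d x)
    (hmono : ∀ d' d : X → Set V', (∀ x, d' x ⊆ d x) → ∀ x, p d' x ⊆ p d x)
    (hcplt : ∀ (d' : X → Set V') (x : X),
        p d' x ⊆ domRel (induced p ∩ licensed d') x)
    (φ : X → V → V') (hφ : ∀ x, Function.Injective (φ x)) :
    ∀ (d : X → Set V) (x : X),
      derived φ p d x ⊆ domRel (liftAsn φ ⁻¹' induced p ∩ licensed d) x := by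
  intro d x v hv
  obtain ⟨a', ⟨ha'ind, ha'lic⟩, ha'x⟩ := hcplt (fun y => φ y '' d y) x hv
  choose b hb hbeq using fun y => ha'lic y
  have hba : liftAsn φ b = a' := funext hbeq
  refine ⟨b, ⟨?_, hb⟩, ?_⟩
  · show liftAsn φ b ∈ induced p
    rw [hba]; exact ha'ind
  · apply hφ x
    show φ x (b x) = φ x v
    rw [hbeq x]; exact ha'x
end

section
/- Let X be a type of variables and V, V' types of values. Let p : (X → Set V') → (X → Set V') be contracting, let φ be a view from V to V', and let d be a domain over V. If φ d is a fixed point of p, i.e., p (p (φ d)) = p (φ d), then d is a fixed point of the derived propagator: φ̂(p) (φ̂(p) d) = φ̂(p) d. -/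
/-- Views preserve fixed points: if `φ d` is a fixed point of `p`,
then `d` is a fixed point of the derived propagator. -/
theorem views_preserve_fixed_points {X V V' : Type*}
    (p : (X → Set V') → (X → Set V'))
    (hcontr : ∀ d x, p d x ⊆ d x)
    (φ : X → V → V') (hφ : ∀ x, Function.Injective (φ x))
    (d : X → Set V)
    (hfix : p (p (fun y => φ y '' d y)) = p (fun y => φ y '' d y)) :
    (fun x => (φ x) ⁻¹'
        (p (fun y => φ y '' ((φ y) ⁻¹' (p (fun z => φ z '' d z) y))) x)) =
    (fun x => (φ x) ⁻¹' (p (fun y => φ y '' d y) x)) := by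
  have h : (fun y => φ y '' ((φ y) ⁻¹' (p (fun z => φ z '' d z) y)))
      = p (fun z => φ z '' d z) := by
    funext y
    exact Set.image_preimage_eq_iff.mpr
      ((hcontr _ y).trans (Set.image_subset_range _ _))
  rw [h, hfix]
end

section
/- Let X be a type of variables and V, V' types of values. Let p : (X → Set V') → (X → Set V') be contracting and idempotent, i.e., p (p d') = p d' for every domain d' over V'. Then for any view φ from V to V', the derived propagator φ̂(p) is idempotent: φ̂(p) (φ̂(p) d) = φ̂(p) d for every domain d over V. -/
/-- Idempotency is inherited by derived propagators. -/
theorem derived_idempotent {X V V' : Type*}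
    (p : (X → Set V') → (X → Set V'))
    (hcontr : ∀ d x, p d x ⊆ d x)
    (hidem : ∀ d' : X → Set V', p (p d') = p d')
    (φ : X → V → V') (hφ : ∀ x, Function.Injective (φ x)) :
    ∀ d : X → Set V,
      (fun x => (φ x) ⁻¹'
          (p (fun y => φ y '' ((φ y) ⁻¹' (p (fun z => φ z '' d z) y))) x)) =
      (fun x => (φ x) ⁻¹' (p (fun y => φ y '' d y) x)) := by
  intro d
  have key : (fun y => φ y '' ((φ y) ⁻¹' (p (fun z => φ z '' d z) y))) =
      p (fun z => φ z '' d z) := by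
    funext y
    rw [Set.image_preimage_eq_iff]
    exact (hcontr _ y).trans (Set.image_subset_range _ _)
  rw [key, hidem]
end

section
/- Let X be a type of variables and V, V' types of values. Let p : (X → Set V') → (X → Set V') be contracting, let φ be a view from V to V', and let d be a domain over V. Then the derived propagator φ̂(p) is subsumed by d if and only if p is subsumed by φ d; that is: (for every domain d' over V with d' x ⊆ d x for all x, φ̂(p) d' = d') if and only if (for every domain d'' over V' with d'' x ⊆ (φ d) x for all x, p d'' = d''). -/
/-!
Since every `φ x` is injective, `d' ↦ φ d'` and `d'' ↦ φ⁻ d''` are mutually inverse bijections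
between the domains stronger than `d` and those stronger than `φ d`. A contracting `p` keeps
`p d''` inside the range of `φ`, where `φ⁻` is injective, so `φ⁻ (p d'') = φ⁻ d''` forces
`p d'' = d''`.
-/

open Set Function

section

variable {X V V' : Type*}

theorem image_preimage_domain_eq {φ : X → V → V'} {d : X → Set V'}
    (hd : ∀ x, d x ⊆ range (φ x)) : (fun x => φ x '' (φ x ⁻¹' d x)) = d :=
  funext fun x => image_preimage_eq_of_subset (hd x)

theorem preimage_image_domain_eq {φ : X → V → V'} (hφ : ∀ x, Injective (φ x)) (d : X → Set V) :
    (fun x => φ x ⁻¹' (φ x '' d x)) = d :=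
  funext fun x => preimage_image_eq (d x) (hφ x)

theorem domain_eq_of_preimage_eq {φ : X → V → V'} {d₁ d₂ : X → Set V'}
    (h₁ : ∀ x, d₁ x ⊆ range (φ x)) (h₂ : ∀ x, d₂ x ⊆ range (φ x))
    (h : (fun x => φ x ⁻¹' d₁ x) = fun x => φ x ⁻¹' d₂ x) : d₁ = d₂ :=
  funext fun x => (preimage_eq_preimage' (h₁ x) (h₂ x)).1 (congrFun h x)

end

/-- The derived propagator is subsumed by `d` iff `p` is subsumed by `φ d`. -/
theorem derived_subsumption {X V V' : Type*}
    (p : (X → Set V') → (X → Set V'))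
    (hcontr : ∀ d x, p d x ⊆ d x)
    (φ : X → V → V') (hφ : ∀ x, Function.Injective (φ x))
    (d : X → Set V) :
    (∀ d' : X → Set V, (∀ x, d' x ⊆ d x) →
        (fun x => (φ x) ⁻¹' (p (fun y => φ y '' d' y) x)) = d') ↔
    (∀ d'' : X → Set V', (∀ x, d'' x ⊆ φ x '' d x) → p d'' = d'') := by
  constructor
  · intro h d'' hsub
    have hrange : ∀ x, d'' x ⊆ range (φ x) := fun x => (hsub x).trans (image_subset_range _ _)
    have hpre : ∀ x, φ x ⁻¹' d'' x ⊆ d x := fun x =>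
      (preimage_mono (hsub x)).trans (preimage_image_eq _ (hφ x)).subset
    have hfix := h _ hpre
    rw [image_preimage_domain_eq hrange] at hfix
    exact domain_eq_of_preimage_eq (fun x => (hcontr d'' x).trans (hrange x)) hrange hfix
  · intro h d' hsub
    rw [h _ fun x => image_mono (hsub x)]
    exact preimage_image_domain_eq hφ d'
end
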